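/- arXiv:2510.23496 — 4 statements merged into one kernel-verified Lean document; each statement's English description precedes it below -/
import Mathlib

section
/- Let θ, A > 0 and N a positive integer. Define q^{(N)}_{A,θ}(k) := A^{↑k} · sum over weakly increasing sequences 1 <= i_1 <= ... <= i_k <= N of (θ^{↑m_1} θ^{↑m_2} ···)/(m_1! m_2! ···), where m_l is the number of indices r with i_r = l, and g^{↑k} = g(g+1)···(g+k-1). Then for every real y > Nθ + A, the series F^{(N)}_{A,θ}(y) := sum_{k>=0} q^{(N)}_{A,θ}(k) / y^{↑k} converges and equals Γ(y - A - Nθ)Γ(y) / (Γ(y - A)Γ(y - Nθ)). -/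
/-!
Grouping the weakly increasing sequences by their multiplicities, the inner sum of `qCoef` is the
`k`-th coefficient of `((1 - x)^{-θ})^N = (1 - x)^{-Nθ}`, i.e. `(Nθ)^{↑k}/k!` (multinomial
Chu–Vandermonde). The series is therefore Gauss's `₂F₁(A, Nθ; y; 1)`.

Gauss's formula `₂F₁(a, b; c; 1) = Γ(c-a-b)Γ(c)/(Γ(c-a)Γ(c-b))` comes from the Beta integral:
`b^{↑k}/c^{↑k} = B(b+k, c-b)/B(b, c-b)` is a moment of `t^{b-1}(1-t)^{c-b-1}` on `(0,1)`, and
summing the binomial series `∑ a^{↑k} tᵏ/k! = (1-t)^{-a}` under the integral leaves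
`B(b, c-a-b)/B(b, c-b)`. All terms are nonnegative, so the interchange is monotone convergence
in `ℝ≥0∞`.
-/

/-- The rising factorial `g^{↑k} = g(g+1)⋯(g+k-1)`, with `g^{↑0} = 1`. -/
noncomputable def risingFactorial (g : ℝ) (k : ℕ) : ℝ :=
  ∏ i ∈ Finset.range k, (g + i)

/-- `q^{(N)}_{A,θ}(k) = A^{↑k} · ∑_{1 ≤ i₁ ≤ ⋯ ≤ i_k ≤ N} (θ^{↑m₁} θ^{↑m₂} ⋯)/(m₁! m₂! ⋯)`,
where `m_l` is the multiplicity of `l` among `i₁,…,i_k`.  A weakly increasing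
sequence is encoded by its tuple of multiplicities `(m₁,…,m_N)` with `∑ m_l = k`. -/
noncomputable def qCoef (A θ : ℝ) (N k : ℕ) : ℝ :=
  risingFactorial A k *
    ∑ m ∈ Finset.Nat.antidiagonalTuple N k,
      ∏ l : Fin N, risingFactorial θ (m l) / (Nat.factorial (m l) : ℝ)

open Finset MeasureTheory

theorem risingFactorial_succ (g : ℝ) (k : ℕ) :
    risingFactorial g (k + 1) = risingFactorial g k * (g + k) :=
  prod_range_succ _ _

theorem risingFactorial_nonneg {g : ℝ} (hg : 0 ≤ g) (k : ℕ) : 0 ≤ risingFactorial g k :=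
  prod_nonneg fun _ _ => by positivity

theorem risingFactorial_pos {g : ℝ} (hg : 0 < g) (k : ℕ) : 0 < risingFactorial g k :=
  prod_pos fun _ _ => by positivity

theorem risingFactorial_eq_ascPochhammer_eval (g : ℝ) (k : ℕ) :
    risingFactorial g k = (ascPochhammer ℝ k).eval g := by
  induction k with
  | zero => simp [risingFactorial]
  | succ k ih => rw [ascPochhammer_succ_eval, ← ih, risingFactorial_succ]

theorem Real.multichoose_eq_risingFactorial_div (a : ℝ) (k : ℕ) :
    Ring.multichoose a k = risingFactorial a k / k.factorial := by
  rw [eq_div_iff (by positivity), mul_comm, ← nsmul_eq_mul,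
    Ring.factorial_nsmul_multichoose_eq_ascPochhammer, Polynomial.ascPochhammer_smeval_eq_eval,
    risingFactorial_eq_ascPochhammer_eval]

theorem Real.multichoose_nonneg {a : ℝ} (ha : 0 ≤ a) (k : ℕ) : 0 ≤ Ring.multichoose a k := by
  rw [multichoose_eq_risingFactorial_div]
  exact div_nonneg (risingFactorial_nonneg ha k) (Nat.cast_nonneg _)

theorem Ring.multichoose_add {R : Type*} [CommRing R] [BinomialRing R] (r s : R) (k : ℕ) :
    multichoose (r + s) k = ∑ ij ∈ antidiagonal k, multichoose r ij.1 * multichoose s ij.2 := by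
  -- Chu–Vandermonde for `choose` at `-r` and `-s`, as `choose (-r) n = (-1)ⁿ • multichoose r n`.
  have h := add_choose_eq (r := -r) (s := -s) k (Commute.all _ _)
  rw [← neg_add, choose_neg'] at h
  rw [← smul_left_cancel_iff (Int.negOnePow k), h, smul_sum]
  refine sum_congr rfl fun ij hij => ?_
  rw [choose_neg', choose_neg', smul_mul_smul_comm, ← mem_antidiagonal.1 hij, Nat.cast_add,
    Int.negOnePow_add]

theorem Finset.Nat.sum_antidiagonalTuple_succ {M : Type*} [AddCommMonoid M] (N k : ℕ)
    (f : (Fin (N + 1) → ℕ) → M) :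
    ∑ m ∈ antidiagonalTuple (N + 1) k, f m =
      ∑ p ∈ antidiagonal k, ∑ m ∈ antidiagonalTuple N p.2, f (Fin.cons p.1 m) := by
  have h : (antidiagonalTuple (N + 1) k).val = (antidiagonal k).val.bind
      fun p => (antidiagonalTuple N p.2).val.map (Fin.cons p.1) :=
    (Multiset.coe_bind _ _).symm
  simp only [Finset.sum, h, Multiset.map_bind, Multiset.sum_bind, Multiset.map_map,
    Function.comp_def]

theorem Ring.multichoose_sum {R : Type*} [CommRing R] [BinomialRing R] {N : ℕ} (θ : Fin N → R)
    (k : ℕ) :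
    multichoose (∑ l, θ l) k =
      ∑ m ∈ Finset.Nat.antidiagonalTuple N k, ∏ l, multichoose (θ l) (m l) := by
  induction N generalizing k with
  | zero =>
    cases k with
    | zero => simp
    | succ k => simp [multichoose_zero_succ]
  | succ N ih =>
    simp only [Fin.sum_univ_succ, multichoose_add, Finset.Nat.sum_antidiagonalTuple_succ,
      Fin.prod_univ_succ, Fin.cons_zero, Fin.cons_succ, ← mul_sum, ih]

theorem qCoef_eq (A θ : ℝ) (N k : ℕ) :
    qCoef A θ N k = risingFactorial A k * risingFactorial (N * θ) k / k.factorial := by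
  simp_rw [qCoef, ← Real.multichoose_eq_risingFactorial_div, ← Ring.multichoose_sum, sum_const,
    card_univ, Fintype.card_fin, nsmul_eq_mul, Real.multichoose_eq_risingFactorial_div,
    mul_div_assoc]

theorem Real.hasSum_multichoose_mul_pow (a : ℝ) {x : ℝ} (hx : |x| < 1) :
    HasSum (fun k => Ring.multichoose a k * x ^ k) ((1 - x) ^ (-a)) := by
  have h := (one_div_one_sub_rpow_hasFPowerSeriesOnBall_zero a).hasSum
    (y := x) (by simpa [edist_dist, dist_eq] using hx)
  simp only [FormalMultilinearSeries.ofScalars_apply_eq, smul_eq_mul, zero_add] at h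
  rw [rpow_neg (by linarith [le_abs_self x]), ← one_div]
  simpa only [Ring.multichoose_eq] using h

theorem tsum_ofReal_multichoose_mul_pow {a t : ℝ} (ha : 0 ≤ a) (ht₀ : 0 ≤ t) (ht₁ : t < 1) :
    ∑' k, ENNReal.ofReal (Ring.multichoose a k * t ^ k) = ENNReal.ofReal ((1 - t) ^ (-a)) := by
  have hs := Real.hasSum_multichoose_mul_pow a (abs_lt.2 ⟨by linarith, ht₁⟩)
  rw [← ENNReal.ofReal_tsum_of_nonneg
      (fun k => mul_nonneg (Real.multichoose_nonneg ha k) (pow_nonneg ht₀ k)) hs.summable,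
    hs.tsum_eq]

theorem hasSum_of_tsum_ofReal_eq {ι : Type*} {f : ι → ℝ} {x : ℝ} (hf : ∀ i, 0 ≤ f i)
    (hx : 0 ≤ x) (h : ∑' i, ENNReal.ofReal (f i) = ENNReal.ofReal x) : HasSum f x := by
  have hs : Summable f := (ENNReal.summable_toReal (h ▸ ENNReal.ofReal_ne_top)).congr
    fun i => ENNReal.toReal_ofReal (hf i)
  rwa [← ENNReal.ofReal_tsum_of_nonneg hf hs, ENNReal.ofReal_eq_ofReal_iff (tsum_nonneg hf) hx,
    ← hs.hasSum_iff] at h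

theorem Real.Gamma_add_nat {x : ℝ} (hx : 0 < x) (k : ℕ) :
    Gamma (x + k) = risingFactorial x k * Gamma x := by
  induction k with
  | zero => simp [risingFactorial]
  | succ k ih =>
    rw [Nat.cast_succ, ← add_assoc, Gamma_add_one (by positivity), ih, risingFactorial_succ]
    ring

namespace ProbabilityTheory

theorem beta_add_nat {u v : ℝ} (hu : 0 < u) (hv : 0 < v) (k : ℕ) :
    beta (u + k) v = risingFactorial u k / risingFactorial (u + v) k * beta u v := by
  have := risingFactorial_pos (add_pos hu hv) k
  have := Real.Gamma_pos_of_pos (add_pos hu hv)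
  rw [beta, beta, add_right_comm, Real.Gamma_add_nat hu, Real.Gamma_add_nat (add_pos hu hv)]
  field_simp

theorem lintegral_Ioo_rpow_mul_one_sub_rpow {u v : ℝ} (hu : 0 < u) (hv : 0 < v) :
    ∫⁻ t in Set.Ioo 0 1, ENNReal.ofReal (t ^ (u - 1) * (1 - t) ^ (v - 1)) =
      ENNReal.ofReal (beta u v) := by
  have hB := beta_pos hu hv
  have h := lintegral_betaPDF_eq_one hu hv
  simp only [lintegral_betaPDF, mul_assoc, ENNReal.ofReal_mul (one_div_pos.2 hB).le] at h
  rw [lintegral_const_mul' _ _ ENNReal.ofReal_ne_top, one_div, ENNReal.ofReal_inv_of_pos hB,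
    mul_comm] at h
  simpa using ENNReal.eq_inv_of_mul_eq_one_left h

end ProbabilityTheory

open ProbabilityTheory

theorem ofReal_risingFactorial_div_eq_lintegral {b c : ℝ} (hb : 0 < b) (hbc : b < c) (k : ℕ) :
    ENNReal.ofReal (risingFactorial b k / risingFactorial c k) =
      ENNReal.ofReal (beta b (c - b))⁻¹ * ∫⁻ t in Set.Ioo 0 1,
        ENNReal.ofReal (t ^ k) * ENNReal.ofReal (t ^ (b - 1) * (1 - t) ^ (c - b - 1)) := by
  have hcb : 0 < c - b := by linarith
  have := beta_pos hb hcb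
  have := risingFactorial_pos (hb.trans hbc) k
  have hmoment : ∫⁻ t in Set.Ioo 0 1,
      ENNReal.ofReal (t ^ k) * ENNReal.ofReal (t ^ (b - 1) * (1 - t) ^ (c - b - 1)) =
      ENNReal.ofReal (beta (b + k) (c - b)) := by
    rw [← lintegral_Ioo_rpow_mul_one_sub_rpow (by positivity) hcb]
    refine setLIntegral_congr_fun measurableSet_Ioo fun t ht => ?_
    rw [← ENNReal.ofReal_mul (pow_nonneg ht.1.le k), add_sub_right_comm, Real.rpow_add ht.1,
      Real.rpow_natCast]
    ring_nf
  rw [hmoment, ← ENNReal.ofReal_mul (by positivity), beta_add_nat hb hcb, add_sub_cancel]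
  field_simp

theorem tsum_ofReal_multichoose_mul_risingFactorial_div {a b c : ℝ} (ha : 0 ≤ a) (hb : 0 < b)
    (hc : a + b < c) :
    ∑' k, ENNReal.ofReal (Ring.multichoose a k * (risingFactorial b k / risingFactorial c k)) =
      ENNReal.ofReal (beta b (c - a - b) / beta b (c - b)) := by
  calc ∑' k, ENNReal.ofReal (Ring.multichoose a k * (risingFactorial b k / risingFactorial c k))
      = ENNReal.ofReal (beta b (c - b))⁻¹ * ∫⁻ t in Set.Ioo 0 1, ∑' k,
          ENNReal.ofReal (Ring.multichoose a k * t ^ k) *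
            ENNReal.ofReal (t ^ (b - 1) * (1 - t) ^ (c - b - 1)) := by
        rw [lintegral_tsum (fun k => by fun_prop), ← ENNReal.tsum_mul_left]
        refine tsum_congr fun k => ?_
        rw [ENNReal.ofReal_mul (Real.multichoose_nonneg ha k),
          ofReal_risingFactorial_div_eq_lintegral hb (by linarith), mul_left_comm,
          ← lintegral_const_mul' _ _ ENNReal.ofReal_ne_top]
        refine congrArg _ (setLIntegral_congr_fun measurableSet_Ioo fun t _ => ?_)
        rw [ENNReal.ofReal_mul (Real.multichoose_nonneg ha k), mul_assoc]
    _ = ENNReal.ofReal (beta b (c - b))⁻¹ *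
          ∫⁻ t in Set.Ioo 0 1, ENNReal.ofReal (t ^ (b - 1) * (1 - t) ^ (c - a - b - 1)) := by
        refine congrArg _ (setLIntegral_congr_fun measurableSet_Ioo fun t ht => ?_)
        have h1t : 0 < 1 - t := by linarith [ht.2]
        rw [ENNReal.tsum_mul_right, tsum_ofReal_multichoose_mul_pow ha ht.1.le ht.2,
          ← ENNReal.ofReal_mul (Real.rpow_nonneg h1t.le _),
          show c - a - b - 1 = -a + (c - b - 1) by ring, Real.rpow_add h1t]
        ring_nf
    _ = ENNReal.ofReal (beta b (c - a - b) / beta b (c - b)) := by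
        rw [lintegral_Ioo_rpow_mul_one_sub_rpow hb (by linarith),
          ← ENNReal.ofReal_mul (inv_nonneg.2 (beta_pos hb (by linarith)).le), inv_mul_eq_div]

theorem hasSum_hypergeometric_at_one {a b c : ℝ} (ha : 0 ≤ a) (hb : 0 < b) (hc : a + b < c) :
    HasSum
      (fun k => risingFactorial a k * risingFactorial b k / (k.factorial * risingFactorial c k))
      (Real.Gamma (c - a - b) * Real.Gamma c / (Real.Gamma (c - a) * Real.Gamma (c - b))) := by
  have hc₀ : 0 < c := by linarith
  have := Real.Gamma_pos_of_pos hb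
  have := Real.Gamma_pos_of_pos hc₀
  have := Real.Gamma_pos_of_pos (show 0 < c - b by linarith)
  have := Real.Gamma_pos_of_pos (show 0 < c - a by linarith)
  have := Real.Gamma_pos_of_pos (show 0 < c - a - b by linarith)
  have hterm (k : ℕ) :
      risingFactorial a k * risingFactorial b k / (k.factorial * risingFactorial c k) =
        Ring.multichoose a k * (risingFactorial b k / risingFactorial c k) := by
    rw [Real.multichoose_eq_risingFactorial_div]; ring
  have hvalue : beta b (c - a - b) / beta b (c - b) =
      Real.Gamma (c - a - b) * Real.Gamma c / (Real.Gamma (c - a) * Real.Gamma (c - b)) := by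
    rw [beta, beta, add_sub_cancel, add_sub_cancel]
    field_simp
  simp_rw [hterm]
  refine hasSum_of_tsum_ofReal_eq (fun k => mul_nonneg (Real.multichoose_nonneg ha k)
    (div_nonneg (risingFactorial_nonneg hb.le k) (risingFactorial_nonneg hc₀.le k)))
    (by positivity) ?_
  rw [tsum_ofReal_multichoose_mul_risingFactorial_div ha hb hc, hvalue]

/-- for `θ, A > 0`, `N ≥ 1` and `y > Nθ + A`, the series
`F^{(N)}_{A,θ}(y) = ∑ₖ q^{(N)}_{A,θ}(k)/y^{↑k}` converges, with sum
`Γ(y-A-Nθ)Γ(y)/(Γ(y-A)Γ(y-Nθ))`. -/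
theorem qCoef_hasSum (θ A : ℝ) (hθ : 0 < θ) (hA : 0 < A) (N : ℕ) (hN : 1 ≤ N)
    (y : ℝ) (hy : N * θ + A < y) :
    HasSum (fun k : ℕ => qCoef A θ N k / risingFactorial y k)
      (Real.Gamma (y - A - N * θ) * Real.Gamma y /
        (Real.Gamma (y - A) * Real.Gamma (y - N * θ))) := by
  have hNθ : 0 < (N : ℝ) * θ := mul_pos (by exact_mod_cast hN) hθ
  simpa only [qCoef_eq, div_div] using
    hasSum_hypergeometric_at_one hA.le hNθ (by linarith)
end

section
/- Let {L^{(N)}}_{N>=1} be a sequence of real N-tuples (L^{(N)}_1, ..., L^{(N)}_N) such that (1/N) sum_{i=1}^N (L^{(N)}_i)^ℓ converges to M_ℓ as N → ∞, for all positive integers ℓ (with M_0 := 1). Let {θ_N} be positive reals with N θ_N → γ > 0. Then for every positive integer ℓ, sum_{i=1}^N [ (L^{(N)}_i - θ_N)^ℓ - (L^{(N)}_i)^ℓ + ((1-i)θ_N)^ℓ - (-i θ_N)^ℓ ] converges to (-1)^{ℓ-1} γ^ℓ - ℓ γ M_{ℓ-1} as N → ∞. -/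
open Filter Finset

/-- if `(1/N) ∑_{i=1}^N (L^{(N)}_i)^ℓ → M_ℓ` for all `ℓ ≥ 1`
(with `M₀ = 1`) and `N θ_N → γ > 0`, then
`∑_{i=1}^N [(L^{(N)}_i - θ_N)^ℓ - (L^{(N)}_i)^ℓ + ((1-i)θ_N)^ℓ - (-iθ_N)^ℓ]
  → (-1)^{ℓ-1} γ^ℓ - ℓ γ M_{ℓ-1}`. -/
theorem sum_limit_high_temperature
    (L : ℕ → ℕ → ℝ) (θ : ℕ → ℝ) (γ : ℝ) (hγ : 0 < γ)
    (hθpos : ∀ N, 0 < θ N)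
    (hθ : Tendsto (fun N : ℕ => (N : ℝ) * θ N) atTop (nhds γ))
    (M : ℕ → ℝ) (hM0 : M 0 = 1)
    (hL : ∀ l : ℕ, 1 ≤ l →
      Tendsto (fun N : ℕ => (1 / (N : ℝ)) * ∑ i ∈ Finset.range N, L N (i + 1) ^ l)
        atTop (nhds (M l)))
    (l : ℕ) (hl : 1 ≤ l) :
    Tendsto (fun N : ℕ => ∑ i ∈ Finset.range N,
        ((L N (i + 1) - θ N) ^ l - L N (i + 1) ^ l
          + (-(i : ℝ) * θ N) ^ l - (-((i : ℝ) + 1) * θ N) ^ l))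
      atTop (nhds ((-1 : ℝ) ^ (l - 1) * γ ^ l - l * γ * M (l - 1))) := by
  obtain ⟨m, rfl⟩ : ∃ m, l = m + 1 := ⟨l - 1, (Nat.succ_pred_eq_of_pos hl).symm⟩
  simp only [Nat.add_sub_cancel]
  push_cast
  have hNinv : Tendsto (fun N : ℕ => ((N : ℝ))⁻¹) atTop (nhds 0) :=
    tendsto_inv_atTop_nhds_zero_nat
  have hθ0 : Tendsto θ atTop (nhds 0) := by
    have h := hθ.mul hNinv
    rw [mul_zero] at h
    apply h.congr'
    filter_upwards [eventually_ge_atTop 1] with N hN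
    have hne : (N : ℝ) ≠ 0 := Nat.cast_ne_zero.mpr (by omega)
    field_simp
  have hS : ∀ k : ℕ, Tendsto (fun N : ℕ => (1 / (N : ℝ)) * ∑ i ∈ range N, L N (i + 1) ^ k)
      atTop (nhds (M k)) := by
    intro k
    match k with
    | 0 =>
      rw [hM0]
      apply Tendsto.congr' _ tendsto_const_nhds
      filter_upwards [eventually_ge_atTop 1] with N hN
      have hne : (N : ℝ) ≠ 0 := Nat.cast_ne_zero.mpr (by omega)
      simp [hne]
    | (k+1) => exact hL (k+1) (by omega)
  have hterm : ∀ k ∈ range (m+1),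
      Tendsto (fun N : ℕ => ((N:ℝ) * θ N) * (θ N)^(m - k) * (-1 : ℝ)^(m + 1 - k) *
        ((m+1).choose k : ℝ) * ((1 / (N:ℝ)) * ∑ i ∈ range N, L N (i+1)^k)) atTop
        (nhds (γ * (0:ℝ)^(m-k) * (-1 : ℝ)^(m + 1 - k) * ((m+1).choose k : ℝ) * M k)) :=
    fun k _ =>
      (((hθ.mul (hθ0.pow _)).mul tendsto_const_nhds).mul tendsto_const_nhds).mul (hS k)
  have hsumlim := tendsto_finset_sum (range (m+1)) hterm
  have hsumval : ∑ k ∈ range (m+1),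
      (γ * (0:ℝ)^(m-k) * (-1 : ℝ)^(m + 1 - k) * ((m+1).choose k : ℝ) * M k)
      = -(((m:ℝ)+1) * γ * M m) := by
    rw [Finset.sum_range_succ, Finset.sum_eq_zero]
    · rw [Nat.sub_self, show m + 1 - m = 1 by omega, pow_zero, pow_one,
        Nat.choose_succ_self_right]
      push_cast
      ring
    · intro k hk
      have h : m - k ≠ 0 := by simp at hk; omega
      simp [zero_pow h]
  have hFlim : Tendsto (fun N : ℕ =>
      (∑ k ∈ range (m+1), ((N:ℝ) * θ N) * (θ N)^(m - k) * (-1 : ℝ)^(m + 1 - k) *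
        ((m+1).choose k : ℝ) * ((1 / (N:ℝ)) * ∑ i ∈ range N, L N (i+1)^k))
      + (-1 : ℝ)^m * ((N:ℝ) * θ N)^(m+1)) atTop
      (nhds ((-1:ℝ)^m * γ^(m+1) - ((m:ℝ)+1) * γ * M m)) := by
    have h := hsumlim.add ((tendsto_const_nhds (x := ((-1:ℝ))^m)).mul (hθ.pow (m+1)))
    rw [hsumval] at h
    convert h using 1
    ring
  have heq : (fun N : ℕ =>
      (∑ k ∈ range (m+1), ((N:ℝ) * θ N) * (θ N)^(m - k) * (-1 : ℝ)^(m + 1 - k) *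
        ((m+1).choose k : ℝ) * ((1 / (N:ℝ)) * ∑ i ∈ range N, L N (i+1)^k))
      + (-1 : ℝ)^m * ((N:ℝ) * θ N)^(m+1))
      =ᶠ[atTop] (fun N : ℕ => ∑ i ∈ Finset.range N,
        ((L N (i + 1) - θ N) ^ (m+1) - L N (i + 1) ^ (m+1)
          + (-(i : ℝ) * θ N) ^ (m+1) - (-((i : ℝ) + 1) * θ N) ^ (m+1))) := by
    filter_upwards [eventually_ge_atTop 1] with N hN
    have hne : (N : ℝ) ≠ 0 := Nat.cast_ne_zero.mpr (by omega)
    have split : (∑ i ∈ Finset.range N,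
        ((L N (i + 1) - θ N) ^ (m+1) - L N (i + 1) ^ (m+1)
          + (-(i : ℝ) * θ N) ^ (m+1) - (-((i : ℝ) + 1) * θ N) ^ (m+1))) =
        (∑ i ∈ range N, ((L N (i+1) - θ N)^(m+1) - L N (i+1)^(m+1)))
        + (∑ i ∈ range N, ((-(i:ℝ)*θ N)^(m+1) - (-((i:ℝ)+1)*θ N)^(m+1))) := by
      rw [← Finset.sum_add_distrib]
      exact Finset.sum_congr rfl (fun i _ => by ring)
    have tel : (∑ i ∈ range N, ((-(i:ℝ)*θ N)^(m+1) - (-((i:ℝ)+1)*θ N)^(m+1)))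
        = (-1:ℝ)^m * ((N:ℝ)*θ N)^(m+1) := by
      have h := Finset.sum_range_sub' (fun i : ℕ => (-(i:ℝ)*θ N)^(m+1)) N
      push_cast at h
      rw [h, show (-(0:ℝ) * θ N) = 0 by ring, zero_pow (Nat.succ_ne_zero m), zero_sub,
        show (-(N:ℝ) * θ N) = -((N:ℝ) * θ N) by ring, neg_pow, pow_succ]
      ring
    have binom : ∀ x y : ℝ, (x - y)^(m+1) - x^(m+1)
        = ∑ k ∈ range (m+1), x^k * (-y)^(m+1-k) * ((m+1).choose k : ℝ) := by
      intro x y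
      rw [sub_eq_add_neg x y, add_pow, Finset.sum_range_succ]
      simp
    have main : (∑ i ∈ range N, ((L N (i+1) - θ N)^(m+1) - L N (i+1)^(m+1)))
        = ∑ k ∈ range (m+1), ((N:ℝ) * θ N) * (θ N)^(m - k) * (-1:ℝ)^(m + 1 - k) *
          ((m+1).choose k : ℝ) * ((1 / (N:ℝ)) * ∑ i ∈ range N, L N (i+1)^k) := by
      calc ∑ i ∈ range N, ((L N (i+1) - θ N)^(m+1) - L N (i+1)^(m+1))
          = ∑ i ∈ range N, ∑ k ∈ range (m+1),
              L N (i+1)^k * (-θ N)^(m+1-k) * ((m+1).choose k : ℝ) :=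
            Finset.sum_congr rfl (fun i _ => binom _ _)
        _ = ∑ k ∈ range (m+1), ∑ i ∈ range N,
              L N (i+1)^k * (-θ N)^(m+1-k) * ((m+1).choose k : ℝ) := Finset.sum_comm
        _ = _ := by
            apply Finset.sum_congr rfl
            intro k hk
            have hkm : k ≤ m := by simp at hk; omega
            rw [← Finset.sum_mul, ← Finset.sum_mul,
              show m + 1 - k = (m - k) + 1 by omega, neg_pow]
            field_simp
            ring
    rw [split, tel, main]
  exact hFlim.congr' heq
end

section
/- Let F(z) be a monic polynomial of degree M with roots ℓ_1, ..., ℓ_M, and suppose F(z) = (prod_{k=1}^M (z-(1-k))) · G(z) where G(z) = 2F1(-M,γ;z;c) is a rational function of z. Then the logarithmic derivative satisfies (ln G(z))' = sum_{k=1}^M [ 1/(z - ℓ_k) - 1/(z - (1-k)) ], and consequently the inverse formal Laplace transform of ln G(z) (as a power series in z^{-1}) equals sum_{n>=0} (t^n/(n+1)!) · sum_{k=1}^M [ (1-k)^{n+1} - ℓ_k^{n+1} ]. -/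
/-!
Away from the poles, `G(z) = ∏ₖ (z - ℓₖ) / ∏ₖ (z - (1 - k))`, so `ln G` is a sum of logarithms of
linear factors. Its logarithmic derivative is therefore a sum of simple fractions, and for `z`
beyond all roots and poles each `ln ((z - ℓ) / (z - a)) = ln (1 - ℓ/z) - ln (1 - a/z)` expands
by the Mercator series `-ln (1 - x) = ∑ xⁿ⁺¹ / (n + 1)`.
-/

open Finset Filter Topology

section LogDeriv

variable {𝕜 ι : Type*} [NontriviallyNormedField 𝕜]

theorem logDeriv_prod_sub (s : Finset ι) (c : ι → 𝕜) {z : 𝕜} (hz : ∀ k ∈ s, z ≠ c k) :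
    logDeriv (fun w => ∏ k ∈ s, (w - c k)) z = ∑ k ∈ s, 1 / (z - c k) := by
  rw [logDeriv_prod (fun k hk => sub_ne_zero.mpr (hz k hk)) (fun k _ => by fun_prop)]
  refine sum_congr rfl fun k _ => ?_
  rw [logDeriv_apply, deriv_sub_const, deriv_id'']

theorem logDeriv_prod_sub_div_prod_sub (s : Finset ι) (ℓ a : ι → 𝕜) {z : 𝕜}
    (hℓ : ∀ k ∈ s, z ≠ ℓ k) (ha : ∀ k ∈ s, z ≠ a k) :
    logDeriv (fun w => (∏ k ∈ s, (w - ℓ k)) / ∏ k ∈ s, (w - a k)) z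
      = ∑ k ∈ s, (1 / (z - ℓ k) - 1 / (z - a k)) := by
  rw [logDeriv_div z (prod_ne_zero_iff.mpr fun k hk => sub_ne_zero.mpr (hℓ k hk))
    (prod_ne_zero_iff.mpr fun k hk => sub_ne_zero.mpr (ha k hk)) (by fun_prop) (by fun_prop),
    logDeriv_prod_sub s ℓ hℓ, logDeriv_prod_sub s a ha, sum_sub_distrib]

end LogDeriv

theorem hasSum_log_sub_div_sub {ℓ a z : ℝ} (hℓ : |ℓ| < |z|) (ha : |a| < |z|) :
    HasSum (fun n : ℕ => (a ^ (n + 1) - ℓ ^ (n + 1)) / ((n : ℝ) + 1) * z⁻¹ ^ (n + 1))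
      (Real.log ((z - ℓ) / (z - a))) := by
  have hz : z ≠ 0 := abs_pos.mp ((abs_nonneg ℓ).trans_lt hℓ)
  have hlt : ∀ {c : ℝ}, |c| < |z| → |c / z| < 1 := fun hc => by
    rwa [abs_div, div_lt_one (abs_pos.mpr hz)]
  have hpos : ∀ {c : ℝ}, |c| < |z| → 0 < 1 - c / z := fun hc =>
    sub_pos.mpr ((le_abs_self _).trans_lt (hlt hc))
  have hquot : (z - ℓ) / (z - a) = (1 - ℓ / z) / (1 - a / z) := by
    rw [one_sub_div hz, one_sub_div hz, div_div_div_cancel_right₀ hz]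
  have key := (Real.hasSum_pow_div_log_of_abs_lt_one (hlt ha)).sub
    (Real.hasSum_pow_div_log_of_abs_lt_one (hlt hℓ))
  rw [neg_sub_neg, ← Real.log_div (hpos hℓ).ne' (hpos ha).ne', ← hquot] at key
  refine key.congr_fun fun n => ?_
  rw [div_pow, div_pow, inv_pow]
  ring

section ProdEqMul

variable {𝕜 ι : Type*} [Fintype ι] {G : 𝕜 → 𝕜} {ℓ a : ι → 𝕜}

theorem eq_prod_sub_div_prod_sub [Field 𝕜]
    (hG : ∀ z, (∀ k, z ≠ a k) → ∏ k, (z - ℓ k) = (∏ k, (z - a k)) * G z)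
    {z : 𝕜} (hz : ∀ k, z ≠ a k) : G z = (∏ k, (z - ℓ k)) / ∏ k, (z - a k) :=
  eq_div_of_mul_eq (prod_ne_zero_iff.mpr fun k _ => sub_ne_zero.mpr (hz k))
    (by rw [hG z hz, mul_comm])

theorem logDeriv_eq_sum_of_prod_eq_mul [NontriviallyNormedField 𝕜]
    (hG : ∀ z, (∀ k, z ≠ a k) → ∏ k, (z - ℓ k) = (∏ k, (z - a k)) * G z)
    {z : 𝕜} (hz : ∀ k, z ≠ a k) (hGz : G z ≠ 0) :
    logDeriv G z = ∑ k, (1 / (z - ℓ k) - 1 / (z - a k)) := by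
  have hℓ : ∀ k ∈ univ, z ≠ ℓ k := fun k _ h => by
    have hzero := hG z hz
    rw [prod_eq_zero (mem_univ k) (sub_eq_zero.mpr h)] at hzero
    exact hGz ((mul_eq_zero.mp hzero.symm).resolve_left
      (prod_ne_zero_iff.mpr fun k _ => sub_ne_zero.mpr (hz k)))
  have hnear : G =ᶠ[𝓝 z] fun w => (∏ k, (w - ℓ k)) / ∏ k, (w - a k) := by
    filter_upwards [eventually_all.2 fun k => eventually_ne_nhds (hz k)] with w hw
    exact eq_prod_sub_div_prod_sub hG hw
  rw [(logDeriv_congr_nhds hnear).eq_of_nhds,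
    logDeriv_prod_sub_div_prod_sub univ ℓ a hℓ fun k _ => hz k]

end ProdEqMul

theorem hasSum_log_of_prod_eq_mul {ι : Type*} [Fintype ι] {G : ℝ → ℝ} {ℓ a : ι → ℝ}
    (hG : ∀ z, (∀ k, z ≠ a k) → ∏ k, (z - ℓ k) = (∏ k, (z - a k)) * G z)
    {z : ℝ} (hℓ : ∀ k, |ℓ k| < |z|) (ha : ∀ k, |a k| < |z|) :
    HasSum (fun n : ℕ => (∑ k, (a k ^ (n + 1) - ℓ k ^ (n + 1))) / ((n : ℝ) + 1) * z⁻¹ ^ (n + 1))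
      (Real.log (G z)) := by
  have hne : ∀ {c : ℝ}, |c| < |z| → z - c ≠ 0 := fun hc h => by
    rw [← sub_eq_zero.mp h] at hc
    exact lt_irrefl _ hc
  rw [eq_prod_sub_div_prod_sub hG fun k => sub_ne_zero.mp (hne (ha k)), ← prod_div_distrib,
    Real.log_prod fun k _ => div_ne_zero (hne (hℓ k)) (hne (ha k))]
  simp only [sum_div, sum_mul]
  exact hasSum_sum fun k _ => hasSum_log_sub_div_sub (hℓ k) (ha k)

theorem stmt12_general (M : ℕ) (G : ℝ → ℝ) (ℓ : Fin M → ℝ)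
    (hG : ∀ z : ℝ, (∀ k : Fin M, z ≠ 1 - ((k : ℕ) + 1 : ℝ)) →
      ∏ k : Fin M, (z - ℓ k)
        = (∏ k : Fin M, (z - (1 - ((k : ℕ) + 1 : ℝ)))) * G z) :
    (∀ z : ℝ, (∀ k : Fin M, z ≠ 1 - ((k : ℕ) + 1 : ℝ)) → G z ≠ 0 →
      deriv G z / G z
        = ∑ k : Fin M, (1 / (z - ℓ k) - 1 / (z - (1 - ((k : ℕ) + 1 : ℝ))))) ∧
    (∀ z : ℝ, (∀ k : Fin M, |ℓ k| < z) → (M : ℝ) < z →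
      HasSum (fun n : ℕ =>
          (∑ k : Fin M, ((1 - ((k : ℕ) + 1 : ℝ)) ^ (n + 1) - ℓ k ^ (n + 1)))
            / ((n : ℝ) + 1) * (z⁻¹) ^ (n + 1))
        (Real.log (G z))) := by
  refine ⟨fun z hz hGz => logDeriv_eq_sum_of_prod_eq_mul hG hz hGz, fun z hℓ hM => ?_⟩
  have hz : |z| = z := abs_of_pos ((Nat.cast_nonneg M).trans_lt hM)
  have hpole : ∀ k : Fin M, |1 - ((k : ℕ) + 1 : ℝ)| < |z| := fun k => by
    rw [hz, sub_add_cancel_right, abs_neg, Nat.abs_cast]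
    exact (Nat.cast_lt.mpr k.2).trans hM
  exact hasSum_log_of_prod_eq_mul hG (fun k => (hℓ k).trans_eq hz.symm) hpole

/-- suppose `F(z) = ∏_{k=1}^M (z - ℓₖ)` is a monic polynomial of
degree `M` with roots `ℓ₁,…,ℓ_M` and `F(z) = (∏_{k=1}^M (z-(1-k))) · G(z)` (for
`z` away from the poles `1-k` of the rational function `G`).  Then
`(ln G(z))' = ∑_{k=1}^M [1/(z-ℓₖ) - 1/(z-(1-k))]`, and the expansion of
`ln G(z)` as a power series in `z⁻¹` has coefficients
`(∑ₖ ((1-k)^{n+1} - ℓₖ^{n+1}))/(n+1)` at `z^{-n-1}`; equivalently, the inverse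
formal Laplace transform of `ln G` is
`∑ₙ (tⁿ/(n+1)!) ∑ₖ ((1-k)^{n+1} - ℓₖ^{n+1})`. -/
theorem stmt12 (M : ℕ) (hM : 1 ≤ M) (G : ℝ → ℝ) (ℓ : Fin M → ℝ)
    (hG : ∀ z : ℝ, (∀ k : Fin M, z ≠ 1 - ((k : ℕ) + 1 : ℝ)) →
      ∏ k : Fin M, (z - ℓ k)
        = (∏ k : Fin M, (z - (1 - ((k : ℕ) + 1 : ℝ)))) * G z) :
    (∀ z : ℝ, (∀ k : Fin M, z ≠ 1 - ((k : ℕ) + 1 : ℝ)) → G z ≠ 0 →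
      deriv G z / G z
        = ∑ k : Fin M, (1 / (z - ℓ k) - 1 / (z - (1 - ((k : ℕ) + 1 : ℝ))))) ∧
    (∀ z : ℝ, (∀ k : Fin M, |ℓ k| < z) → (M : ℝ) < z →
      HasSum (fun n : ℕ =>
          (∑ k : Fin M, ((1 - ((k : ℕ) + 1 : ℝ)) ^ (n + 1) - ℓ k ^ (n + 1)))
            / ((n : ℝ) + 1) * (z⁻¹) ^ (n + 1))
        (Real.log (G z))) :=
  stmt12_general M G ℓ hG
end

section
/- Let γ, η > 0 and c ∈ (0,1), and let F^{planch}(z) = 1F1(γ; z; -η)/Γ(z) = (1/Γ(z)) sum_{n>=0} (γ^{↑n}/z^{↑n}) (-η)^n/n!. Then F^{planch} extends to an entire function of z of finite order: there exist constants A, r > 0 such that |F^{planch}(z)| <= exp(|z|^A) for all |z| > r. -/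
/-- The complex rising factorial `g^{↑n} = g(g+1)⋯(g+n-1)`. -/
noncomputable def risingC (g : ℂ) (n : ℕ) : ℂ :=
  ∏ i ∈ Finset.range n, (g + i)

/-!
Put `aₙ = γ^{↑n} (-η)ⁿ / n!`. Since `Γ(z + n) = Γ(z) z^{↑n}`, away from the poles
`F^{planch}(z) = ∑ₙ aₙ / Γ(z + n)`, and the right-hand side has no poles at all.

Euler's limit `1/Γ(s) = lim s ∏_{j=1}^n (1 + s/j) n^{-s}`, with `|1 + x| ≤ exp(Re x + |x|²/2)`
and `|H_n - log n| ≤ 1`, gives `|1/Γ(s)| ≤ exp((|s| + 1)²)` on the whole plane. Past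
`n = 2|z| + 2` each step `Γ(z + n + 1) = (z + n) Γ(z + n)` has `|z + n| ≥ (n + 1)/2`, which
sharpens this to `|1/Γ(z + n)| ≤ exp((4|z| + 5)²) 2ⁿ / n!`. As `|aₙ| ≤ Bⁿ`, the series converges locally
uniformly, hence is entire, and `|F(z)| ≤ exp((4|z| + 5)² + 2B) ≤ exp(|z|³)` for large `|z|`.
-/

open Complex Finset
open scoped Nat

lemma Complex.norm_one_add_le_exp (x : ℂ) :
    ‖1 + x‖ ≤ Real.exp (x.re + ‖x‖ ^ 2 / 2) := by
  have hsq : ‖1 + x‖ ^ 2 ≤ Real.exp (x.re + ‖x‖ ^ 2 / 2) ^ 2 :=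
    calc ‖1 + x‖ ^ 2 = 2 * x.re + ‖x‖ ^ 2 + 1 := by
          simp only [Complex.sq_norm, Complex.normSq_apply, Complex.add_re, Complex.add_im,
            Complex.one_re, Complex.one_im]
          ring
      _ ≤ Real.exp (2 * x.re + ‖x‖ ^ 2) := Real.add_one_le_exp _
      _ = Real.exp (x.re + ‖x‖ ^ 2 / 2) ^ 2 := by rw [← Real.exp_nat_mul]; ring_nf
  exact (pow_le_pow_iff_left₀ (norm_nonneg _) (Real.exp_pos _).le two_ne_zero).1 hsq

lemma Complex.norm_add_ofReal_le_exp (s : ℂ) {r : ℝ} (hr : 0 < r) :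
    ‖s + r‖ ≤ r * Real.exp (s.re / r + ‖s‖ ^ 2 / (2 * r ^ 2)) := by
  have h := norm_one_add_le_exp (s / r)
  rw [Complex.div_ofReal_re, norm_div, Complex.norm_real, Real.norm_of_nonneg hr.le,
    div_pow, div_div, mul_comm (r ^ 2)] at h
  have hr' : (r : ℂ) ≠ 0 := Complex.ofReal_ne_zero.2 hr.ne'
  calc ‖s + r‖ = ‖(r : ℂ) * (1 + s / r)‖ := by
        rw [mul_add, mul_div_cancel₀ _ hr', mul_one, add_comm]
    _ = r * ‖1 + s / r‖ := by rw [norm_mul, Complex.norm_real, Real.norm_of_nonneg hr.le]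
    _ ≤ r * Real.exp (s.re / r + ‖s‖ ^ 2 / (2 * r ^ 2)) := by gcongr

lemma sum_range_inv_add_one_sq_le_two (n : ℕ) :
    ∑ j ∈ range n, (((j : ℝ) + 1) ^ 2)⁻¹ ≤ 2 := by
  have h := sum_Ioo_inv_sq_le (α := ℝ) 0 (n + 1)
  rw [← Finset.Ico_add_one_left_eq_Ioo, zero_add, Finset.sum_Ico_eq_sum_range] at h
  simpa [add_comm] using h

lemma Complex.norm_prod_range_add_le (s : ℂ) (n : ℕ) :
    ‖∏ j ∈ range (n + 1), (s + j)‖ ≤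
      ‖s‖ * n ! * Real.exp (s.re * harmonic n + ‖s‖ ^ 2) := by
  have hfactor (j : ℕ) : ‖s + (j + 1 : ℕ)‖ ≤ ((j : ℝ) + 1) *
      Real.exp (s.re * ((j : ℝ) + 1)⁻¹ + ‖s‖ ^ 2 / 2 * (((j : ℝ) + 1) ^ 2)⁻¹) := by
    have h := norm_add_ofReal_le_exp s (r := (j : ℝ) + 1) (by positivity)
    push_cast at h ⊢
    convert h using 4 <;> field_simp
  have hsum : ∑ j ∈ range n,
      (s.re * ((j : ℝ) + 1)⁻¹ + ‖s‖ ^ 2 / 2 * (((j : ℝ) + 1) ^ 2)⁻¹) ≤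
        s.re * harmonic n + ‖s‖ ^ 2 := by
    rw [sum_add_distrib, ← mul_sum, ← mul_sum]
    have := sum_range_inv_add_one_sq_le_two n
    push_cast [harmonic]
    nlinarith [sq_nonneg ‖s‖]
  have hprod :
      ∏ j ∈ range n, ‖s + (j + 1 : ℕ)‖ ≤ n ! * Real.exp (s.re * harmonic n + ‖s‖ ^ 2) :=
    calc ∏ j ∈ range n, ‖s + (j + 1 : ℕ)‖
        ≤ ∏ j ∈ range n, (((j : ℝ) + 1) *
            Real.exp (s.re * ((j : ℝ) + 1)⁻¹ + ‖s‖ ^ 2 / 2 * (((j : ℝ) + 1) ^ 2)⁻¹)) :=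
          prod_le_prod (fun _ _ => norm_nonneg _) fun j _ => hfactor j
      _ ≤ n ! * Real.exp (s.re * harmonic n + ‖s‖ ^ 2) := by
          rw [prod_mul_distrib, ← Real.exp_sum]
          gcongr
          exact_mod_cast (prod_range_add_one_eq_factorial n).le
  rw [prod_range_succ', norm_mul, norm_prod, Nat.cast_zero, add_zero]
  nlinarith [norm_nonneg s]

lemma Complex.norm_inv_GammaSeq_le (s : ℂ) {n : ℕ} (hn : n ≠ 0) :
    ‖(GammaSeq s n)⁻¹‖ ≤ ‖s‖ * Real.exp (‖s‖ + ‖s‖ ^ 2) := by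
  have hn' : (0 : ℝ) < n := by positivity
  have hlog_succ := log_add_one_le_harmonic n
  push_cast at hlog_succ
  have hlog : Real.log n ≤ harmonic n ∧ (harmonic n : ℝ) ≤ 1 + Real.log n :=
    ⟨(Real.log_le_log hn' (by linarith)).trans hlog_succ, harmonic_le_one_add_log n⟩
  have hre := abs_le.1 (Complex.abs_re_le_norm s)
  have hexp : s.re * harmonic n + ‖s‖ ^ 2 - s.re * Real.log n ≤ ‖s‖ + ‖s‖ ^ 2 := by
    nlinarith [norm_nonneg s]
  rw [GammaSeq, inv_div, norm_div, norm_mul, norm_natCast_cpow_of_pos (Nat.pos_of_ne_zero hn),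
    Complex.norm_natCast, Real.rpow_def_of_pos hn', div_le_iff₀ (by positivity)]
  calc ‖∏ j ∈ range (n + 1), (s + j)‖
      ≤ ‖s‖ * n ! * Real.exp (s.re * harmonic n + ‖s‖ ^ 2) := norm_prod_range_add_le s n
    _ ≤ ‖s‖ * n ! * Real.exp (‖s‖ + ‖s‖ ^ 2 + Real.log n * s.re) := by
        gcongr ‖s‖ * n ! * Real.exp ?_
        linarith
    _ = ‖s‖ * Real.exp (‖s‖ + ‖s‖ ^ 2) * (Real.exp (Real.log n * s.re) * n !) := by
        rw [Real.exp_add]; ring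

lemma Complex.norm_inv_Gamma_le (s : ℂ) : ‖(Gamma s)⁻¹‖ ≤ Real.exp ((‖s‖ + 1) ^ 2) := by
  have hbound : ‖(Gamma s)⁻¹‖ ≤ ‖s‖ * Real.exp (‖s‖ + ‖s‖ ^ 2) := by
    by_cases h : Gamma s = 0
    · rw [h, inv_zero, norm_zero]
      positivity
    exact le_of_tendsto ((GammaSeq_tendsto_Gamma s).inv₀ h).norm
      ((Filter.eventually_ne_atTop 0).mono fun n hn => norm_inv_GammaSeq_le s hn)
  calc ‖(Gamma s)⁻¹‖ ≤ Real.exp ‖s‖ * Real.exp (‖s‖ + ‖s‖ ^ 2) := by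
        refine hbound.trans ?_
        gcongr
        linarith [Real.add_one_le_exp ‖s‖]
    _ ≤ Real.exp ((‖s‖ + 1) ^ 2) := by
        rw [← Real.exp_add]
        gcongr
        nlinarith

lemma Nat.cast_factorial_le_exp_sq (n : ℕ) : (n ! : ℝ) ≤ Real.exp (n ^ 2) :=
  calc (n ! : ℝ) ≤ (n : ℝ) ^ n := by exact_mod_cast n.factorial_le_pow
    _ ≤ Real.exp n ^ n := by gcongr; linarith [Real.add_one_le_exp n]
    _ = Real.exp (n ^ 2) := by rw [← Real.exp_nat_mul, sq]

lemma Complex.norm_inv_Gamma_add_nat_mul_factorial_div_le {z : ℂ} {N n : ℕ}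
    (hN : 2 * ‖z‖ + 2 ≤ N) (hn : N ≤ n) :
    ‖(Gamma (z + n))⁻¹‖ * n ! / 2 ^ n ≤ ‖(Gamma (z + N))⁻¹‖ * N ! / 2 ^ N := by
  induction n, hn using Nat.le_induction with
  | base => exact le_rfl
  | succ n hNn ih =>
    have hlarge : (n : ℝ) + 1 ≤ 2 * ‖z + n‖ := by
      have hn : (N : ℝ) ≤ n := by exact_mod_cast hNn
      have := norm_sub_norm_le (n : ℂ) (-z)
      rw [Complex.norm_natCast, norm_neg, sub_neg_eq_add, add_comm] at this
      linarith
    have hne : z + n ≠ 0 := norm_pos_iff.1 (by linarith)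
    calc ‖(Gamma (z + (n + 1 : ℕ)))⁻¹‖ * (n + 1)! / 2 ^ (n + 1)
        = ‖(Gamma (z + n))⁻¹‖ * n ! / 2 ^ n * (((n : ℝ) + 1) / (2 * ‖z + n‖)) := by
          rw [Nat.cast_add_one, ← add_assoc, Gamma_add_one _ hne, Nat.factorial_succ]
          push_cast
          rw [mul_inv, norm_mul, norm_inv]
          field_simp
          ring
      _ ≤ ‖(Gamma (z + n))⁻¹‖ * n ! / 2 ^ n := by
          apply mul_le_of_le_one_right (by positivity)
          rw [div_le_one (by linarith)]
          exact hlarge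
      _ ≤ _ := ih

lemma Complex.norm_inv_Gamma_add_nat_le (z : ℂ) (n : ℕ) :
    ‖(Gamma (z + n))⁻¹‖ ≤ Real.exp ((4 * ‖z‖ + 5) ^ 2) * 2 ^ n / n ! := by
  set N := ⌈2 * ‖z‖ + 2⌉₊
  have hN : 2 * ‖z‖ + 2 ≤ N := Nat.le_ceil _
  have hN' : (N : ℝ) < 2 * ‖z‖ + 3 := by
    linarith [Nat.ceil_lt_add_one (by positivity : 0 ≤ 2 * ‖z‖ + 2)]
  have hinitial {k : ℕ} (hk : k ≤ N) :
      ‖(Gamma (z + k))⁻¹‖ * k ! ≤ Real.exp ((4 * ‖z‖ + 5) ^ 2) := by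
    have hk' : (k : ℝ) ≤ N := by exact_mod_cast hk
    have hzk : ‖z + k‖ ≤ ‖z‖ + N := by
      linarith [norm_add_le z k, Complex.norm_natCast k]
    calc ‖(Gamma (z + k))⁻¹‖ * k !
        ≤ Real.exp ((‖z‖ + N + 1) ^ 2) * Real.exp ((N : ℝ) ^ 2) := by
          gcongr
          · exact (norm_inv_Gamma_le _).trans (by gcongr)
          · exact (Nat.cast_factorial_le_exp_sq k).trans (by gcongr)
      _ ≤ Real.exp ((4 * ‖z‖ + 5) ^ 2) := by
          rw [← Real.exp_add]
          gcongr
          nlinarith [norm_nonneg z, Nat.cast_nonneg (α := ℝ) N]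
  have hbound : ‖(Gamma (z + n))⁻¹‖ * n ! / 2 ^ n ≤ Real.exp ((4 * ‖z‖ + 5) ^ 2) := by
    rcases le_total n N with hn | hn
    · exact (div_le_self (by positivity) (one_le_pow₀ one_le_two)).trans (hinitial hn)
    · exact (norm_inv_Gamma_add_nat_mul_factorial_div_le hN hn).trans
        ((div_le_self (by positivity) (one_le_pow₀ one_le_two)).trans (hinitial le_rfl))
  rw [div_le_iff₀ (by positivity)] at hbound
  rw [le_div_iff₀ (by positivity)]
  linarith

lemma Real.hasSum_pow_div_factorial (x : ℝ) : HasSum (fun n => x ^ n / n !) (Real.exp x) := by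
  simpa [Real.exp_eq_exp_ℝ] using NormedSpace.expSeries_div_hasSum_exp x

lemma risingC_eq_ascPochhammer_eval (g : ℂ) (n : ℕ) :
    risingC g n = (ascPochhammer ℂ n).eval g := by
  induction n with
  | zero => simp [risingC]
  | succ n ih => rw [risingC, prod_range_succ, ← risingC, ih, ascPochhammer_succ_eval]

lemma Complex.Gamma_add_nat_eq_mul_risingC {z : ℂ} (hz : ∀ k : ℕ, z ≠ -k) (n : ℕ) :
    Gamma (z + n) = Gamma z * risingC z n := by
  rw [risingC_eq_ascPochhammer_eval, ← Gamma_add_nat_div_Gamma_eq z hz,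
    mul_div_cancel₀ _ (Gamma_ne_zero hz)]

lemma norm_risingC_mul_pow_div_factorial_le (g w : ℂ) (n : ℕ) :
    ‖risingC g n * w ^ n / (n ! : ℂ)‖ ≤ ((‖g‖ + 1) * ‖w‖) ^ n := by
  have hrising : ‖risingC g n‖ ≤ (‖g‖ + 1) ^ n * n ! := by
    rw [risingC, norm_prod, ← prod_range_add_one_eq_factorial, Nat.cast_prod, pow_eq_prod_const,
      ← prod_mul_distrib]
    refine prod_le_prod (fun _ _ => norm_nonneg _) fun i _ => ?_
    have := norm_add_le g i
    rw [Complex.norm_natCast] at this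
    push_cast
    nlinarith [norm_nonneg g, Nat.cast_nonneg (α := ℝ) i]
  rw [norm_div, norm_mul, norm_pow, Complex.norm_natCast, div_le_iff₀ (by positivity), mul_pow]
  calc ‖risingC g n‖ * ‖w‖ ^ n ≤ (‖g‖ + 1) ^ n * n ! * ‖w‖ ^ n := by gcongr
    _ = (‖g‖ + 1) ^ n * ‖w‖ ^ n * n ! := by ring

noncomputable def invGammaShiftSeries (a : ℕ → ℂ) (z : ℂ) : ℂ :=
  ∑' n, a n * (Gamma (z + n))⁻¹

section InvGammaShiftSeries

variable {a : ℕ → ℂ} {B : ℝ}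

lemma norm_mul_inv_Gamma_add_nat_le (ha : ∀ n, ‖a n‖ ≤ B ^ n) (z : ℂ) (n : ℕ) :
    ‖a n * (Gamma (z + n))⁻¹‖ ≤ Real.exp ((4 * ‖z‖ + 5) ^ 2) * ((2 * B) ^ n / n !) :=
  calc ‖a n * (Gamma (z + n))⁻¹‖
        ≤ B ^ n * (Real.exp ((4 * ‖z‖ + 5) ^ 2) * 2 ^ n / n !) := by
        rw [norm_mul]
        exact mul_le_mul (ha n) (norm_inv_Gamma_add_nat_le z n) (norm_nonneg _)
          ((norm_nonneg _).trans (ha n))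
    _ = Real.exp ((4 * ‖z‖ + 5) ^ 2) * ((2 * B) ^ n / n !) := by ring

lemma differentiable_invGammaShiftSeries (ha : ∀ n, ‖a n‖ ≤ B ^ n) :
    Differentiable ℂ (invGammaShiftSeries a) := by
  intro z₀
  set R := ‖z₀‖ + 1
  have hdiff : DifferentiableOn ℂ (invGammaShiftSeries a) (Metric.ball 0 R) := by
    refine differentiableOn_tsum_of_summable_norm
      ((Real.hasSum_pow_div_factorial (2 * B)).summable.mul_left (Real.exp ((4 * R + 5) ^ 2)))
      (fun n => ((differentiable_one_div_Gamma.comp (differentiable_id.add_const _)).const_mul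
        _).differentiableOn) Metric.isOpen_ball fun n w hw => ?_
    refine (norm_mul_inv_Gamma_add_nat_le ha w n).trans ?_
    have hB : 0 ≤ B := (norm_nonneg _).trans (pow_one B ▸ ha 1)
    rw [mem_ball_zero_iff] at hw
    gcongr
  exact hdiff.differentiableAt (Metric.isOpen_ball.mem_nhds (by simp [R]))

lemma norm_invGammaShiftSeries_le (ha : ∀ n, ‖a n‖ ≤ B ^ n) (z : ℂ) :
    ‖invGammaShiftSeries a z‖ ≤ Real.exp ((4 * ‖z‖ + 5) ^ 2 + 2 * B) := by
  have hsum :=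
    (Real.hasSum_pow_div_factorial (2 * B)).mul_left (Real.exp ((4 * ‖z‖ + 5) ^ 2))
  rw [Real.exp_add]
  exact tsum_of_norm_bounded hsum (norm_mul_inv_Gamma_add_nat_le ha z)

end InvGammaShiftSeries

lemma invGammaShiftSeries_eq (a : ℕ → ℂ) {z : ℂ} (hz : ∀ k : ℕ, z ≠ -k) :
    invGammaShiftSeries a z = (Gamma z)⁻¹ * ∑' n, a n / risingC z n := by
  rw [invGammaShiftSeries, ← tsum_mul_left]
  congr 1 with n
  rw [Gamma_add_nat_eq_mul_risingC hz, mul_inv]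
  ring

theorem stmt18_general (γ η : ℝ) :
    ∃ F : ℂ → ℂ,
      (∀ z : ℂ, AnalyticAt ℂ F z) ∧
      (∀ z : ℂ, (∀ n : ℕ, z ≠ -(n : ℂ)) →
        F z = (Complex.Gamma z)⁻¹ *
          ∑' n : ℕ, risingC (γ : ℂ) n / risingC z n * (-(η : ℂ)) ^ n
            / (Nat.factorial n : ℂ)) ∧
      ∃ A r : ℝ, 0 < A ∧ 0 < r ∧
        ∀ z : ℂ, r < ‖z‖ →
          ‖F z‖ ≤ Real.exp (‖z‖ ^ A) := by
  set B := (‖(γ : ℂ)‖ + 1) * ‖(-(η : ℂ))‖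
  have ha (n : ℕ) : ‖risingC γ n * (-(η : ℂ)) ^ n / (n ! : ℂ)‖ ≤ B ^ n :=
    norm_risingC_mul_pow_div_factorial_le _ _ n
  refine ⟨invGammaShiftSeries _, (differentiable_invGammaShiftSeries ha).analyticAt,
    fun z hz => ?_, 3, 50 + 2 * B, by norm_num, by positivity, fun z hz => ?_⟩
  · rw [invGammaShiftSeries_eq _ hz]
    exact congrArg _ (tsum_congr fun n => by ring)
  · have hB : 0 ≤ B := by positivity
    calc ‖invGammaShiftSeries _ z‖ ≤ Real.exp ((4 * ‖z‖ + 5) ^ 2 + 2 * B) :=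
          norm_invGammaShiftSeries_le ha z
      _ ≤ Real.exp (‖z‖ ^ (3 : ℝ)) := by
          rw [show (3 : ℝ) = (3 : ℕ) by norm_num, Real.rpow_natCast]
          gcongr
          nlinarith [sq_nonneg ‖z‖]

/-- for `γ, η > 0` (and `c ∈ (0,1)`), the function
`F^{planch}(z) = ₁F₁(γ;z;-η)/Γ(z) = (1/Γ(z)) ∑ₙ (γ^{↑n}/z^{↑n})(-η)ⁿ/n!`
extends to an entire function of finite order: there are `A, r > 0` with
`|F^{planch}(z)| ≤ exp(|z|^A)` for all `|z| > r`. -/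
theorem stmt18 (γ η c : ℝ) (hγ : 0 < γ) (hη : 0 < η)
    (hc : 0 < c) (hc1 : c < 1) :
    ∃ F : ℂ → ℂ,
      (∀ z : ℂ, AnalyticAt ℂ F z) ∧
      (∀ z : ℂ, (∀ n : ℕ, z ≠ -(n : ℂ)) →
        F z = (Complex.Gamma z)⁻¹ *
          ∑' n : ℕ, risingC (γ : ℂ) n / risingC z n * (-(η : ℂ)) ^ n
            / (Nat.factorial n : ℂ)) ∧
      ∃ A r : ℝ, 0 < A ∧ 0 < r ∧
        ∀ z : ℂ, r < ‖z‖ →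
          ‖F z‖ ≤ Real.exp (‖z‖ ^ A) :=
  stmt18_general γ η
end
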